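/- The transvectant is SL(2,ℂ)-equivariant: for binary forms f of degree n, g of degree p, r ≤ min(n,p), and γ ∈ SL(2,ℂ), one has (γ·f, γ·g)_r = γ·(f,g)_r, where (γ·f)(ξ) = f(γ⁻¹ξ). -/

import Mathlib

open Complex MvPolynomial Finset Matrix

/-- `k`-th iterated partial derivative in the variable `i` of a binary form. -/
noncomputable def pdIter (i : Fin 2) (k : ℕ) (p : MvPolynomial (Fin 2) ℂ) :
    MvPolynomial (Fin 2) ℂ :=
  (fun q => MvPolynomial.pderiv i q)^[k] p

/-- The transvectant of index `r`:
`(f,g)_r = Σ_{i=0}^{r} (−1)ⁱ C(r,i) (∂ʳf/∂u^{r−i}∂vⁱ)(∂ʳg/∂uⁱ∂v^{r−i})`. -/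
noncomputable def transvectant (r : ℕ) (f g : MvPolynomial (Fin 2) ℂ) :
    MvPolynomial (Fin 2) ℂ :=
  ∑ i ∈ Finset.range (r + 1),
    ((-1 : ℂ) ^ i * (r.choose i : ℂ)) •
      (pdIter 0 (r - i) (pdIter 1 i f) * pdIter 0 i (pdIter 1 (r - i) g))

/-- The action of `SL(2,ℂ)` on binary forms by linear substitution with the inverse matrix:
`(γ·f)(ξ) = f(γ⁻¹ξ)`. -/
noncomputable def slAct (γ : Matrix.SpecialLinearGroup (Fin 2) ℂ)
    (f : MvPolynomial (Fin 2) ℂ) : MvPolynomial (Fin 2) ℂ :=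
  MvPolynomial.bind₁
    (fun j => ∑ k : Fin 2,
      MvPolynomial.C ((↑γ : Matrix (Fin 2) (Fin 2) ℂ)⁻¹ j k) * MvPolynomial.X k) f

/-! The transvectant is `μ ∘ Ωʳ` applied to `f ⊗ g`, where `Ω = ∂ᵤ ⊗ ∂ᵥ - ∂ᵥ ⊗ ∂ᵤ` is Cayley's
Ω-process on `ℂ[u,v] ⊗ ℂ[u,v]` and `μ` is multiplication; the binomial expansion of `Ωʳ` is
the defining sum, since the two terms of `Ω` commute. For the linear substitution `S` by a
matrix `A`, the chain rule gives `∂ᵢ ∘ S = S ∘ ∑ⱼ Aⱼᵢ ∂ⱼ`, hence `Ω ∘ (S ⊗ S) = det A • (S ⊗ S) ∘ Ω`,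
and `μ ∘ (S ⊗ S) = S ∘ μ` because `S` is multiplicative. When `det A = 1`, `S` therefore
commutes with `μ ∘ Ωʳ`. -/

open scoped TensorProduct RingTheory.LinearMap

namespace MvPolynomial

variable {R σ τ : Type*} [CommSemiring R]

theorem pderiv_pderiv_comm (i j : σ) (p : MvPolynomial σ R) :
    pderiv i (pderiv j p) = pderiv j (pderiv i p) := by
  classical
  induction p using MvPolynomial.induction_on with
  | C a => simp
  | add p q hp hq => simp [hp, hq]
  | mul_X p k hp =>
    simp only [pderiv_mul, map_add, hp, pderiv_X, Pi.single_apply]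
    split_ifs <;> subst_vars <;> simp [add_comm]

theorem pderiv_bind₁ [Fintype σ] (φ : σ → MvPolynomial τ R) (i : τ) (p : MvPolynomial σ R) :
    pderiv i (bind₁ φ p) = ∑ j, pderiv i (φ j) * bind₁ φ (pderiv j p) := by
  classical
  induction p using MvPolynomial.induction_on with
  | C a => simp
  | add p q hp hq => simp [hp, hq, mul_add, Finset.sum_add_distrib]
  | mul_X p k hp =>
    simp only [map_mul, bind₁_X_right, pderiv_mul, hp, map_add, pderiv_X, Pi.single_apply,
      mul_add, Finset.sum_add_distrib, Finset.sum_mul]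
    simp [mul_assoc, mul_comm]

noncomputable def linearSubst [Fintype σ] (A : Matrix σ σ R) : MvPolynomial σ R →ₐ[R] MvPolynomial σ R :=
  bind₁ fun j => ∑ k, C (A j k) * X k

theorem pderiv_linearSubst [Fintype σ] (A : Matrix σ σ R) (i : σ) (p : MvPolynomial σ R) :
    pderiv i (linearSubst A p) = ∑ j, A j i • linearSubst A (pderiv j p) := by
  classical
  simp [linearSubst, pderiv_bind₁, pderiv_X, Pi.single_apply, smul_eq_C_mul]

theorem pderiv_mul_linearSubst [Fintype σ] (A : Matrix σ σ R) (i : σ) :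
    (pderiv i).toLinearMap * (linearSubst A).toLinearMap =
      (linearSubst A).toLinearMap * ∑ j, A j i • (pderiv j).toLinearMap :=
  LinearMap.ext fun p => by simp [pderiv_linearSubst]

end MvPolynomial

theorem LinearMap.mul'_map_algHom {R A : Type*} [CommSemiring R] [CommSemiring A] [Algebra R A]
    (φ : A →ₐ[R] A) (z : A ⊗[R] A) :
    LinearMap.mul' R A (TensorProduct.map φ.toLinearMap φ.toLinearMap z) =
      φ (LinearMap.mul' R A z) := by
  induction z using TensorProduct.induction_on with
  | zero => simp
  | tmul x y => simp
  | add x y hx hy => simp [hx, hy]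

section OmegaProcess

variable {R M : Type*} [CommRing R] [AddCommGroup M] [Module R M]

noncomputable def omegaOperator (D : Fin 2 → Module.End R M) : Module.End R (M ⊗[R] M) :=
  D 0 ⊗ₘ D 1 - D 1 ⊗ₘ D 0

theorem omegaOperator_mul_map_self (D : Fin 2 → Module.End R M) (S : Module.End R M)
    (A : Matrix (Fin 2) (Fin 2) R) (hD : ∀ i, D i * S = S * ∑ j, A j i • D j) :
    omegaOperator D * (S ⊗ₘ S) = A.det • ((S ⊗ₘ S) * omegaOperator D) := by
  calc omegaOperator D * (S ⊗ₘ S) = (D 0 * S) ⊗ₘ (D 1 * S) - (D 1 * S) ⊗ₘ (D 0 * S) := by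
        rw [omegaOperator, sub_mul, ← TensorProduct.map_mul, ← TensorProduct.map_mul]
    _ = (S ⊗ₘ S) * ((∑ j, A j 0 • D j) ⊗ₘ (∑ j, A j 1 • D j) -
          (∑ j, A j 1 • D j) ⊗ₘ (∑ j, A j 0 • D j)) := by
        rw [hD, hD, TensorProduct.map_mul, TensorProduct.map_mul, mul_sub]
    _ = (S ⊗ₘ S) * (A.det • omegaOperator D) := by
        congr 1
        simp only [Fin.sum_univ_two, TensorProduct.map_add_left, TensorProduct.map_add_right,
          TensorProduct.map_smul_left, TensorProduct.map_smul_right, omegaOperator,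
          Matrix.det_fin_two]
        match_scalars <;> ring
    _ = A.det • ((S ⊗ₘ S) * omegaOperator D) := mul_smul_comm _ _ _

theorem omegaOperator_pow (D : Fin 2 → Module.End R M) (hD : Commute (D 0) (D 1)) (r : ℕ) :
    omegaOperator D ^ r = ∑ i ∈ range (r + 1), ((-1 : R) ^ i * r.choose i) •
      ((D 0 ^ (r - i) * D 1 ^ i) ⊗ₘ (D 0 ^ i * D 1 ^ (r - i))) := by
  have hYX : Commute (D 1 ⊗ₘ D 0 : Module.End R (M ⊗[R] M)) (D 0 ⊗ₘ D 1) := by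
    rw [Commute, SemiconjBy, ← TensorProduct.map_mul, ← TensorProduct.map_mul, hD.eq]
  rw [omegaOperator, sub_eq_neg_add, hYX.neg_left.add_pow]
  refine sum_congr rfl fun i _ => ?_
  rw [← neg_one_smul R (D 1 ⊗ₘ D 0), smul_pow, smul_mul_assoc, ← nsmul_eq_mul',
    ← Nat.cast_smul_eq_nsmul R, smul_smul, mul_comm (r.choose i : R), TensorProduct.map_pow,
    TensorProduct.map_pow, ← TensorProduct.map_mul, (hD.pow_pow (r - i) i).eq]

end OmegaProcess

section CayleyOmega

variable (R : Type*) [CommRing R]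

noncomputable def cayleyOmega :
    Module.End R (MvPolynomial (Fin 2) R ⊗[R] MvPolynomial (Fin 2) R) :=
  omegaOperator fun i => (pderiv i).toLinearMap

variable {R}

theorem commute_cayleyOmega_map_linearSubst {A : Matrix (Fin 2) (Fin 2) R} (hA : A.det = 1) :
    Commute (cayleyOmega R) ((linearSubst A).toLinearMap ⊗ₘ (linearSubst A).toLinearMap) := by
  have h := omegaOperator_mul_map_self _ _ A (pderiv_mul_linearSubst A)
  rwa [hA, one_smul] at h

end CayleyOmega

theorem pderiv_pow_apply (i : Fin 2) (k : ℕ) (p : MvPolynomial (Fin 2) ℂ) :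
    ((pderiv i).toLinearMap ^ k) p = pdIter i k p := by
  rw [Module.End.pow_apply]
  rfl

theorem transvectant_eq_mul'_cayleyOmega_pow (r : ℕ) (f g : MvPolynomial (Fin 2) ℂ) :
    transvectant r f g = LinearMap.mul' ℂ _ ((cayleyOmega ℂ ^ r) (f ⊗ₜ g)) := by
  have hD : Commute (pderiv 0 : Derivation ℂ (MvPolynomial (Fin 2) ℂ) _).toLinearMap
      (pderiv 1).toLinearMap :=
    LinearMap.ext (pderiv_pderiv_comm 0 1)
  rw [cayleyOmega, omegaOperator_pow _ hD, LinearMap.sum_apply, map_sum, transvectant]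
  refine sum_congr rfl fun i _ => ?_
  rw [LinearMap.smul_apply, TensorProduct.map_tmul, map_smul, LinearMap.mul'_apply,
    Module.End.mul_apply, Module.End.mul_apply, pderiv_pow_apply, pderiv_pow_apply,
    pderiv_pow_apply, pderiv_pow_apply]

theorem transvectant_equivariant_general (r : ℕ) (f g : MvPolynomial (Fin 2) ℂ)
    (γ : Matrix.SpecialLinearGroup (Fin 2) ℂ) :
    transvectant r (slAct γ f) (slAct γ g) = slAct γ (transvectant r f g) := by
  set S := linearSubst (γ : Matrix (Fin 2) (Fin 2) ℂ)⁻¹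
  have hdet : ((γ : Matrix (Fin 2) (Fin 2) ℂ)⁻¹).det = 1 := by simp
  have hcomm : Commute (cayleyOmega ℂ ^ r) (S.toLinearMap ⊗ₘ S.toLinearMap) :=
    (commute_cayleyOmega_map_linearSubst hdet).pow_left r
  change transvectant r (S f) (S g) = S (transvectant r f g)
  rw [transvectant_eq_mul'_cayleyOmega_pow, transvectant_eq_mul'_cayleyOmega_pow,
    ← AlgHom.toLinearMap_apply, ← AlgHom.toLinearMap_apply S g, ← TensorProduct.map_tmul,
    ← Module.End.mul_apply, hcomm.eq, Module.End.mul_apply, LinearMap.mul'_map_algHom]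

/-- The transvectant is `SL(2,ℂ)`-equivariant: for binary forms `f` of degree `n`, `g` of
degree `p`, `r ≤ min(n,p)` and `γ ∈ SL(2,ℂ)`, `(γ·f, γ·g)_r = γ·(f,g)_r`. -/
theorem transvectant_equivariant (n p r : ℕ) (f g : MvPolynomial (Fin 2) ℂ)
    (hf : f.IsHomogeneous n) (hg : g.IsHomogeneous p) (hr : r ≤ min n p)
    (γ : Matrix.SpecialLinearGroup (Fin 2) ℂ) :
    transvectant r (slAct γ f) (slAct γ g) = slAct γ (transvectant r f g) :=
  transvectant_equivariant_general r f g γ
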